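/- arXiv:1702.02374 — 5 statements merged into one kernel-verified Lean document; each statement's English description precedes it below -/
import Mathlib

section
/- Let K be a field of characteristic zero and let C_1, C_2, … ∈ K and δ_0 = 1, δ_1, δ_2, … ∈ K. Suppose M(z) = Σ_{n≥0} M_n z^{n+1} (with M_0 = 1) satisfies the functional equation M(z) = z / (1 - z·C(M(z)⊙Δ(z))), where C(z) = Σ_{n≥1} C_n z^{n-1}, Δ(z) = Σ_{n≥0} δ_n z^{n+1}, and ⊙ is the Hadamard product. Then for all n ≥ 2, (n-1)·C_n equals the coefficient of z^{-1} in (M'(z)/M(z)^2 − 1/z^2) / (M(z)⊙Δ(z))^{n-1}, where the quotient is computed in formal Laurent series. -/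
noncomputable section
open PowerSeries

/-- Hadamard (coefficientwise) product of formal power series. -/
def hadamard {R : Type*} [CommRing R] (f g : PowerSeries R) : PowerSeries R :=
  PowerSeries.mk fun n => (PowerSeries.coeff n f) * (PowerSeries.coeff n g)
/-- For `H` with zero constant term, this is the composition
`C(H(z)) = Σ_{k≥1} C_k H(z)^{k-1}` of `C(z) = Σ_{k≥1} C_k z^{k-1}` with `H`. -/
def cser {K : Type*} [Field K] (C : ℕ → K) (H : PowerSeries K) : PowerSeries K :=
  PowerSeries.mk fun n =>
    ∑ k ∈ Finset.range (n + 1), C (k + 1) * PowerSeries.coeff n (H ^ k)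

/-!
Writing `H = M ⊙ Δ`, the functional equation says `1 / M = 1 / z - C(H)`, so differentiating,
`M' / M² - 1 / z² = C(H)' = ∑ₖ C_{k+1} (Hᵏ)'`. Since `H = z + O(z²)`, the residue of
`(Hᵏ)' / H^(n-1)` is `0` for `k ≠ n - 1` (a derivative of a power of `H`, or a power series) and
`n - 1` for `k = n - 1` (it is `(n - 1) H' / H`). Factoring `H = z U`, all residues become power
series coefficients of `(Hᵏ)' U^(-(n-1))`, and only `C(H)` modulo `z^n` matters.
-/

open LaurentSeries

@[simp]
theorem coeff_hadamard {R : Type*} [CommRing R] (f g : R⟦X⟧) (n : ℕ) :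
    coeff n (hadamard f g) = coeff n f * coeff n g :=
  coeff_mk _ _

theorem coeff_derivative_mul_eq_zero_of_X_pow_dvd {R : Type*} [CommRing R] {f : R⟦X⟧} {m : ℕ}
    (hf : X ^ (m + 2) ∣ f) (g : R⟦X⟧) : coeff m (d⁄dX R f * g) = 0 := by
  obtain ⟨F, rfl⟩ := hf
  have hdvd : X ^ (m + 1) ∣ d⁄dX R (X ^ (m + 2) * F) :=
    ⟨(m + 2 : R⟦X⟧) * F + X * d⁄dX R F, by
      rw [Derivation.leibniz, derivative_pow, derivative_X, smul_eq_mul, smul_eq_mul]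
      push_cast
      ring⟩
  exact X_pow_dvd_iff.mp (dvd_mul_of_dvd_left hdvd g) m (lt_add_one m)

section Field

variable {K : Type*} [Field K]

theorem coeff_derivative_X_mul_mul_inv_pow [CharZero K] {U : K⟦X⟧} (hU : constantCoeff U ≠ 0)
    (q : ℕ) : coeff q (d⁄dX K (X * U) * U⁻¹ ^ (q + 1)) = if q = 0 then 1 else 0 := by
  have hUV : U * U⁻¹ = 1 := PowerSeries.mul_inv_cancel U hU
  rcases q with _ | q
  · simp [Derivation.leibniz, coeff_zero_eq_constantCoeff, hU]
  -- `hid` is `X ^ (q + 2)` times the derivative of `(X U) ^ (-(q + 1))`; as for any derivative,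
  -- its left side has no `X ^ (q + 1)` term (no residue)
  have hid : X * d⁄dX K (U⁻¹ ^ (q + 1)) - C ((q : K) + 1) * U⁻¹ ^ (q + 1) =
      -C ((q : K) + 1) * (d⁄dX K (X * U) * U⁻¹ ^ (q + 1 + 1)) := by
    rw [derivative_pow, derivative_inv', Derivation.leibniz, derivative_X, smul_eq_mul,
      smul_eq_mul, map_add, map_one, map_natCast]
    push_cast
    linear_combination ((q : K⟦X⟧) + 1) * U⁻¹ ^ (q + 1) * hUV
  have hcoeff := congrArg (coeff (q + 1)) hid
  rw [map_sub, coeff_succ_X_mul, coeff_derivative, coeff_C_mul, neg_mul, map_neg, coeff_C_mul,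
    mul_comm _ ((q : K) + 1), sub_self, eq_comm, neg_eq_zero, mul_eq_zero] at hcoeff
  have hq : (q : K) + 1 ≠ 0 := by exact_mod_cast q.succ_ne_zero
  simpa using hcoeff.resolve_left hq

theorem coeff_derivative_X_mul_pow_mul_inv_pow [CharZero K] {U : K⟦X⟧}
    (hU : constantCoeff U ≠ 0) (k m : ℕ) :
    coeff m (d⁄dX K ((X * U) ^ k) * U⁻¹ ^ (m + 1)) = if k = m + 1 then (m + 1 : K) else 0 := by
  rcases k with _ | j
  · simp
  rcases le_or_gt j m with hjm | hmj
  · obtain ⟨q, rfl⟩ := Nat.exists_eq_add_of_le hjm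
    have hUV : U * U⁻¹ = 1 := PowerSeries.mul_inv_cancel U hU
    have hsplit : d⁄dX K ((X * U) ^ (j + 1)) * U⁻¹ ^ (j + q + 1) =
        C ((j : K) + 1) * X ^ j * (d⁄dX K (X * U) * U⁻¹ ^ (q + 1)) := by
      have hUVj : U ^ j * U⁻¹ ^ j = 1 := by rw [← mul_pow, hUV, one_pow]
      rw [derivative_pow, Nat.add_sub_cancel, map_add, map_one, map_natCast]
      push_cast
      linear_combination ((j : K⟦X⟧) + 1) * X ^ j * d⁄dX K (X * U) * U⁻¹ ^ (q + 1) * hUVj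
    rw [hsplit, mul_assoc, coeff_C_mul, add_comm j q, coeff_X_pow_mul,
      coeff_derivative_X_mul_mul_inv_pow hU]
    rcases q with _ | q <;> simp
  · have hdvd : X ^ (m + 2) ∣ (X * U) ^ (j + 1) := by
      rw [mul_pow]
      exact dvd_mul_of_dvd_left (pow_dvd_pow (X : K⟦X⟧) (by omega)) _
    rw [coeff_derivative_mul_eq_zero_of_X_pow_dvd hdvd, if_neg (by omega)]

theorem X_pow_dvd_cser_sub_sum (C : ℕ → K) {H : K⟦X⟧} (hH : constantCoeff H = 0) (N : ℕ) :
    X ^ N ∣ cser C H - ∑ k ∈ Finset.range N, C (k + 1) • H ^ k := by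
  rw [X_pow_dvd_iff]
  intro j hj
  have hvanish : ∀ k ∈ Finset.range N, k ∉ Finset.range (j + 1) →
      C (k + 1) * coeff j (H ^ k) = 0 := fun k _ hk => by
      rw [X_pow_dvd_iff.mp (pow_dvd_pow_of_dvd (X_dvd_iff.mpr hH) k) j (by simp_all), mul_zero]
  simp only [map_sub, cser, coeff_mk, map_sum, coeff_smul, smul_eq_mul]
  rw [Finset.sum_subset (Finset.range_subset_range.mpr (by omega)) hvanish, sub_self]

theorem coeff_derivative_cser_X_mul_mul_inv_pow [CharZero K] (C : ℕ → K) {U : K⟦X⟧}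
    (hU : constantCoeff U ≠ 0) (m : ℕ) :
    coeff m (d⁄dX K (cser C (X * U)) * U⁻¹ ^ (m + 1)) = (m + 1) * C (m + 2) := by
  obtain ⟨F, hF⟩ := X_pow_dvd_cser_sub_sum C (H := X * U) (by simp) (m + 2)
  rw [sub_eq_iff_eq_add'.mp hF, map_add, add_mul, map_add,
    coeff_derivative_mul_eq_zero_of_X_pow_dvd (dvd_mul_right _ _), add_zero, map_sum,
    Finset.sum_mul, map_sum]
  simp only [Derivation.map_smul, smul_mul_assoc, coeff_smul, smul_eq_mul,
    coeff_derivative_X_mul_pow_mul_inv_pow hU, mul_ite, mul_zero, Finset.sum_ite_eq',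
    Finset.mem_range]
  simp [mul_comm]

theorem coeff_neg_one_coe_div_X_pow (B : K⟦X⟧) (m : ℕ) :
    ((B : K⸨X⸩) / ((X : K⟦X⟧) : K⸨X⸩) ^ (m + 1)).coeff (-1) = coeff m B := by
  rw [div_eq_mul_inv, ← coe_pow, HahnSeries.ofPowerSeries_X_pow, HahnSeries.inv_single, inv_one,
    mul_comm, show (-1 : ℤ) = m + -((m + 1 : ℕ) : ℤ) by push_cast; ring,
    HahnSeries.coeff_single_mul_add, one_mul, coeff_coe_powerSeries]

theorem coe_div_coe_X_mul_pow {U : K⟦X⟧} (hU : constantCoeff U ≠ 0) (f : K⟦X⟧) (k : ℕ) :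
    (f : K⸨X⸩) / ((X * U : K⟦X⟧) : K⸨X⸩) ^ k =
      ((f * U⁻¹ ^ k : K⟦X⟧) : K⸨X⸩) / ((X : K⟦X⟧) : K⸨X⸩) ^ k := by
  have hUV : (U : K⸨X⸩) * (U⁻¹ : K⟦X⟧) = 1 := by
    rw [← coe_mul, PowerSeries.mul_inv_cancel U hU, coe_one]
  have hX : ((X : K⟦X⟧) : K⸨X⸩) ≠ 0 := by simp
  have hU' : (U : K⸨X⸩) ≠ 0 := left_ne_zero_of_mul_eq_one hUV
  have hUVk : ((U : K⸨X⸩) * (U⁻¹ : K⟦X⟧)) ^ k = 1 := by rw [hUV, one_pow]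
  simp only [coe_mul, coe_pow]
  rw [div_eq_div_iff (pow_ne_zero _ (mul_ne_zero hX hU')) (pow_ne_zero _ hX)]
  linear_combination -((f : K⸨X⸩) * ((X : K⟦X⟧) : K⸨X⸩) ^ k) * hUVk

theorem coe_derivative_div_sq_sub_one_div_X_sq {M c : K⟦X⟧} (h : M * (1 - X * c) = X) :
    ((d⁄dX K M : K⟦X⟧) : K⸨X⸩) / (M : K⸨X⸩) ^ 2 - 1 / ((X : K⟦X⟧) : K⸨X⸩) ^ 2 =
      ((d⁄dX K c : K⟦X⟧) : K⸨X⸩) := by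
  have hM : M ≠ 0 := by
    rintro rfl
    rw [zero_mul] at h
    exact X_ne_zero h.symm
  have hd := congrArg (d⁄dX K) h
  rw [Derivation.leibniz, map_sub, Derivation.leibniz, derivative_X, derivative_one,
    smul_eq_mul, smul_eq_mul, smul_eq_mul] at hd
  have hps : X ^ 2 * d⁄dX K M = M ^ 2 + X ^ 2 * M ^ 2 * d⁄dX K c := by
    linear_combination (X * M) * hd - (M + X * d⁄dX K M) * h
  have hX : ((X : K⟦X⟧) : K⸨X⸩) ≠ 0 := by simp
  have hM' : (M : K⸨X⸩) ≠ 0 := (map_ne_zero_iff _ HahnSeries.ofPowerSeries_injective).mpr hM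
  rw [div_sub_div _ _ (pow_ne_zero 2 hM') (pow_ne_zero 2 hX),
    div_eq_iff (mul_ne_zero (pow_ne_zero 2 hM') (pow_ne_zero 2 hX))]
  have := congrArg (fun f : K⟦X⟧ => (f : K⸨X⸩)) hps
  simp only [coe_mul, coe_pow, coe_add] at this
  linear_combination this

end Field

theorem lagrange_delta_cumulants_general {K : Type*} [Field K] [CharZero K]
    (C δ Mo : ℕ → K) (hδ0 : δ 0 = 1) (hMo0 : Mo 0 = 1)
    (M Δs : PowerSeries K)
    (hM0 : PowerSeries.coeff 0 M = 0) (hM : ∀ n, PowerSeries.coeff (n + 1) M = Mo n)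
    (hΔ : ∀ n, PowerSeries.coeff (n + 1) Δs = δ n)
    -- the functional equation `M(z) = z / (1 - z·C(M(z)⊙Δ(z)))`:
    (heq : M * (1 - PowerSeries.X * cser C (hadamard M Δs)) = PowerSeries.X) :
    ∀ n : ℕ, 2 ≤ n →
      ((n : K) - 1) * C n =
        ((((PowerSeries.derivative K M : PowerSeries K) : LaurentSeries K) /
            ((M : LaurentSeries K)) ^ 2 -
          1 / ((PowerSeries.X : PowerSeries K) : LaurentSeries K) ^ 2) /
          ((hadamard M Δs : PowerSeries K) : LaurentSeries K) ^ (n - 1)).coeff (-1) := by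
  intro n hn
  obtain ⟨m, rfl⟩ : ∃ m, n = m + 2 := ⟨n - 2, by omega⟩
  obtain ⟨U, hHU⟩ : X ∣ hadamard M Δs := X_dvd_iff.mpr (by
    rw [← coeff_zero_eq_constantCoeff_apply, coeff_hadamard, hM0, zero_mul])
  have hU : constantCoeff U ≠ 0 := by
    have h1 := congrArg (coeff 1) hHU
    rw [coeff_hadamard, hM 0, hΔ 0, hMo0, hδ0, coeff_succ_X_mul,
      coeff_zero_eq_constantCoeff_apply] at h1
    simp [← h1]
  rw [coe_derivative_div_sq_sub_one_div_X_sq heq, hHU, show m + 2 - 1 = m + 1 from rfl,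
    coe_div_coe_X_mul_pow hU, coeff_neg_one_coe_div_X_pow,
    coeff_derivative_cser_X_mul_mul_inv_pow C hU]
  push_cast
  ring

theorem lagrange_delta_cumulants {K : Type*} [Field K] [CharZero K]
    (C δ Mo : ℕ → K) (hδ0 : δ 0 = 1) (hMo0 : Mo 0 = 1)
    (M Δs : PowerSeries K)
    (hM0 : PowerSeries.coeff 0 M = 0) (hM : ∀ n, PowerSeries.coeff (n + 1) M = Mo n)
    (hΔ0 : PowerSeries.coeff 0 Δs = 0) (hΔ : ∀ n, PowerSeries.coeff (n + 1) Δs = δ n)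
    -- the functional equation `M(z) = z / (1 - z·C(M(z)⊙Δ(z)))`:
    (heq : M * (1 - PowerSeries.X * cser C (hadamard M Δs)) = PowerSeries.X) :
    ∀ n : ℕ, 2 ≤ n →
      ((n : K) - 1) * C n =
        ((((PowerSeries.derivative K M : PowerSeries K) : LaurentSeries K) /
            ((M : LaurentSeries K)) ^ 2 -
          1 / ((PowerSeries.X : PowerSeries K) : LaurentSeries K) ^ 2) /
          ((hadamard M Δs : PowerSeries K) : LaurentSeries K) ^ (n - 1)).coeff (-1) :=
  lagrange_delta_cumulants_general C δ Mo hδ0 hMo0 M Δs hM0 hM hΔ heq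
end
end

section
/- Let M(z) = z + Σ_{n≥2} M_{n-1} z^n be a formal power series over a field of characteristic zero, and define the free cumulants F_n by the functional equation M(z) = z/(1 − z·F(M(z))), where F(z) = Σ_{n≥1} F_n z^{n-1}. Then for all n ≥ 2, F_n = −(1/(n−1)) · [z^1] (1/M(z)^{n−1}), where 1/M(z)^{n−1} is computed as a formal Laurent series. -/
/-!
Put `v = 1 - z·F(M)`, so that `M·v = z` and `1/M^(n-1) = v^(n-1)/z^(n-1)`: the claim is
`F_n = -[z^n] v^(n-1) / (n-1)`. Differentiating `M·v = z` gives `v·M' = 1 - M·v'`, hence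
`a·[z^i](v^(a+1)·M') = (a - i)·[z^i] v^a`. In particular `[z^j](M^k·v^(j+1)·M') = δ_kj` for
`k ≤ j`, a formal residue that extracts `F_(j+1) = [z^j](F(M)·v^(j+1)·M')`. Multiplying by `z` and
using `z·F(M) = 1 - v` rewrites this as `[z^(j+1)](v^(j+1)·M') - [z^(j+1)](v^(j+2)·M')`; the second
term vanishes and the first is `-[z^(j+1)] v^j / j`.
-/

noncomputable section
open PowerSeries

namespace PowerSeries

theorem coeff_X_mul_derivative {R : Type*} [CommRing R] (f : R⟦X⟧) (i : ℕ) :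
    coeff i (X * d⁄dX R f) = i * coeff i f := by
  cases i with
  | zero => simp
  | succ i => rw [coeff_succ_X_mul, coeff_derivative, mul_comm]; push_cast; ring

section InverseSeries

variable {R : Type*} [CommRing R] {M v : R⟦X⟧}

theorem mul_derivative_of_mul_eq_X (hMv : M * v = X) :
    v * d⁄dX R M = 1 - M * d⁄dX R v := by
  have h := congrArg (d⁄dX R) hMv
  rw [Derivation.leibniz, derivative_X, smul_eq_mul, smul_eq_mul] at h
  linear_combination h

theorem nsmul_pow_succ_mul_derivative (hMv : M * v = X) (a : ℕ) :
    a • (v ^ (a + 1) * d⁄dX R M) = a • v ^ a - X * d⁄dX R (v ^ a) := by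
  cases a with
  | zero => simp
  | succ a =>
    have hpow : d⁄dX R (v ^ (a + 1)) = (a + 1 : ℕ) * (v ^ a * d⁄dX R v) := by
      rw [Derivation.leibniz_pow, nsmul_eq_mul, smul_eq_mul, Nat.add_sub_cancel]
    rw [hpow, nsmul_eq_mul, nsmul_eq_mul, ← hMv]
    linear_combination (↑(a + 1) * v ^ (a + 1) : R⟦X⟧) * mul_derivative_of_mul_eq_X hMv

theorem natCast_mul_coeff_pow_succ_mul_derivative (hMv : M * v = X) (a i : ℕ) :
    (a : R) * coeff i (v ^ (a + 1) * d⁄dX R M) = ((a : R) - i) * coeff i (v ^ a) := by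
  have h := congrArg (coeff i) (nsmul_pow_succ_mul_derivative hMv a)
  rw [map_nsmul, map_sub, map_nsmul, coeff_X_mul_derivative, nsmul_eq_mul, nsmul_eq_mul] at h
  rw [h]; ring

theorem coeff_pow_succ_mul_derivative [IsDomain R] [CharZero R]
    (hM0 : constantCoeff M = 0) (hMv : M * v = X) (j : ℕ) :
    coeff j (v ^ (j + 1) * d⁄dX R M) = if j = 0 then 1 else 0 := by
  split_ifs with hj
  · subst hj
    rw [zero_add, pow_one, coeff_zero_eq_constantCoeff, mul_derivative_of_mul_eq_X hMv]
    simp [hM0]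
  · have h := natCast_mul_coeff_pow_succ_mul_derivative hMv j j
    rw [sub_self, zero_mul] at h
    exact (mul_eq_zero.mp h).resolve_left (Nat.cast_ne_zero.mpr hj)

theorem coeff_pow_mul_pow_succ_mul_derivative [IsDomain R] [CharZero R]
    (hM0 : constantCoeff M = 0) (hMv : M * v = X) {k j : ℕ} (hk : k ≤ j) :
    coeff j (M ^ k * (v ^ (j + 1) * d⁄dX R M)) = if k = j then 1 else 0 := by
  obtain ⟨l, rfl⟩ := Nat.exists_eq_add_of_le hk
  have hsplit : M ^ k * (v ^ (k + l + 1) * d⁄dX R M) = X ^ k * (v ^ (l + 1) * d⁄dX R M) := by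
    rw [← hMv]; ring
  rw [hsplit, add_comm k l, coeff_X_pow_mul, coeff_pow_succ_mul_derivative hM0 hMv]
  simp

end InverseSeries

section Field

variable {K : Type*} [Field K] {M v : K⟦X⟧}

theorem coeff_cser_mul (hM0 : constantCoeff M = 0) (C : ℕ → K) (A : K⟦X⟧) (j : ℕ) :
    coeff j (cser C M * A) = ∑ k ∈ Finset.range (j + 1), C (k + 1) * coeff j (M ^ k * A) := by
  have hdvd : X ^ (j + 1) ∣
      cser C M - ∑ k ∈ Finset.range (j + 1), PowerSeries.C (C (k + 1)) * M ^ k := by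
    rw [X_pow_dvd_iff]
    intro m hm
    rw [map_sub, map_sum, cser, coeff_mk, sub_eq_zero]
    simp only [coeff_C_mul]
    rw [← Finset.sum_range_add_sum_Ico _ (show m + 1 ≤ j + 1 by omega), left_eq_add]
    refine Finset.sum_eq_zero fun k hk => ?_
    have hXk : X ^ k ∣ M ^ k := pow_dvd_pow_of_dvd (X_dvd_iff.mpr hM0) k
    rw [X_pow_dvd_iff.mp hXk m (Finset.mem_Ico.mp hk).1, mul_zero]
  have h := X_pow_dvd_iff.mp (dvd_mul_of_dvd_left hdvd A) j (Nat.lt_succ_self j)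
  rw [sub_mul, map_sub, sub_eq_zero] at h
  rw [h, Finset.sum_mul, map_sum]
  simp only [mul_assoc, coeff_C_mul]

theorem one_div_coe_pow_of_mul_eq_X (hMv : M * v = X) (k : ℕ) :
    1 / (M : LaurentSeries K) ^ k
      = ((v ^ k : K⟦X⟧) : LaurentSeries K) * HahnSeries.single (-k : ℤ) (1 : K) := by
  refine (eq_one_div_of_mul_eq_one_left ?_).symm
  rw [mul_right_comm, ← coe_pow, ← coe_mul, ← mul_pow, mul_comm v, hMv,
    HahnSeries.ofPowerSeries_X_pow, HahnSeries.single_mul_single, one_mul, add_neg_cancel,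
    HahnSeries.single_zero_one]

theorem coeff_one_div_coe_pow_of_mul_eq_X (hMv : M * v = X) (k i : ℕ) :
    (1 / (M : LaurentSeries K) ^ k).coeff (i - k : ℤ) = coeff i (v ^ k) := by
  rw [one_div_coe_pow_of_mul_eq_X hMv, sub_eq_add_neg, HahnSeries.coeff_mul_single_add, mul_one,
    LaurentSeries.coeff_coe_powerSeries]

variable [CharZero K]

theorem coeff_cser_mul_pow_succ_mul_derivative (hM0 : constantCoeff M = 0) (hMv : M * v = X)
    (C : ℕ → K) (j : ℕ) : coeff j (cser C M * (v ^ (j + 1) * d⁄dX K M)) = C (j + 1) := by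
  rw [coeff_cser_mul hM0, Finset.sum_congr rfl fun k hk => by
    rw [coeff_pow_mul_pow_succ_mul_derivative hM0 hMv (Finset.mem_range_succ_iff.mp hk)]]
  simp

theorem eq_neg_div_coeff_pow_of_mul_eq_X {C : ℕ → K} (hM0 : constantCoeff M = 0)
    (heq : M * (1 - X * cser C M) = X) {m : ℕ} (hm : m ≠ 0) :
    C (m + 1) = -(1 / (m : K)) * coeff (m + 1) ((1 - X * cser C M) ^ m) := by
  set v := 1 - X * cser C M
  have hXG : X * cser C M = 1 - v := by ring
  have h1 : C (m + 1) = coeff (m + 1) (v ^ (m + 1) * d⁄dX K M)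
      - coeff (m + 1) (v ^ (m + 1 + 1) * d⁄dX K M) :=
    calc C (m + 1) = coeff m (cser C M * (v ^ (m + 1) * d⁄dX K M)) :=
          (coeff_cser_mul_pow_succ_mul_derivative hM0 heq C m).symm
      _ = coeff (m + 1) ((1 - v) * (v ^ (m + 1) * d⁄dX K M)) := by
          rw [← coeff_succ_X_mul, ← mul_assoc, hXG]
      _ = _ := by rw [sub_mul, one_mul, map_sub, ← mul_assoc, ← pow_succ']
  rw [coeff_pow_succ_mul_derivative hM0 heq (m + 1), if_neg m.succ_ne_zero, sub_zero] at h1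
  have h2 := natCast_mul_coeff_pow_succ_mul_derivative heq m (m + 1)
  rw [h1]
  field_simp
  push_cast at h2
  linear_combination h2

end Field

end PowerSeries

theorem lagrange_free_cumulants_general {K : Type*} [Field K] [CharZero K]
    (F : ℕ → K) (M : PowerSeries K)
    (hM0 : PowerSeries.coeff 0 M = 0)
    -- the functional equation `M(z) = z / (1 - z·F(M(z)))`:
    (heq : M * (1 - PowerSeries.X * cser F M) = PowerSeries.X) :
    ∀ n : ℕ, 2 ≤ n →
      F n = -(1 / ((n : K) - 1)) * ((1 / ((M : LaurentSeries K)) ^ (n - 1)).coeff 1) := by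
  intro n hn
  obtain ⟨m, rfl⟩ : ∃ m, n = m + 1 := ⟨n - 1, by omega⟩
  have hcoeff := coeff_one_div_coe_pow_of_mul_eq_X heq m (m + 1)
  rw [show ((m + 1 : ℕ) : ℤ) - m = 1 by push_cast; ring] at hcoeff
  rw [Nat.add_sub_cancel, hcoeff, Nat.cast_succ, add_sub_cancel_right]
  exact eq_neg_div_coeff_pow_of_mul_eq_X (by rwa [← coeff_zero_eq_constantCoeff_apply]) heq
    (by omega)

theorem lagrange_free_cumulants {K : Type*} [Field K] [CharZero K]
    (F : ℕ → K) (M : PowerSeries K)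
    (hM0 : PowerSeries.coeff 0 M = 0) (hM1 : PowerSeries.coeff 1 M = 1)
    -- the functional equation `M(z) = z / (1 - z·F(M(z)))`:
    (heq : M * (1 - PowerSeries.X * cser F M) = PowerSeries.X) :
    ∀ n : ℕ, 2 ≤ n →
      F n = -(1 / ((n : K) - 1)) * ((1 / ((M : LaurentSeries K)) ^ (n - 1)).coeff 1) :=
  lagrange_free_cumulants_general F M hM0 heq
end
end

section
/- Define moments from free cumulants by M(z) = z/(1 − z F(M(z))) with M(z) = z + Σ_{n≥2} M_{n-1} z^n and F(z) = Σ_{n≥1} F_n z^{n-1} over a field of characteristic zero. Then for all n ≥ 1, M_n = (1/(n+1)) · [z^n] (1 + z F(z))^{n+1}. -/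
noncomputable section
open PowerSeries

/-!
Write `φ = 1 + X·f`, so that the functional equation says `M = X·Φ` with `Φ = φ(M)`. Then
`(n+1)·[z^{n+1}] M = [z^n] M' = [z^n] φ(M)^{n+1}·Φ^{-(n+1)}·M'`, and expanding `φ^{n+1}` gives
`Σ_k [z^k] φ^{n+1} · [z^n] M^k Φ^{-(n+1)} M'`. Since `M^k = X^k Φ^k`, the `k`-th term is
`[z^{n-k}] Φ^{-(n-k+1)}·(XΦ)'`, which is `1` for `k = n` and `0` otherwise: for `i ≥ 1`,
`Φ^{-(i+1)}·(XΦ)' = Φ^{-i} - X·(Φ^{-i})'/i`, whose coefficient of `z^i` vanishes.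
-/

namespace PowerSeries

section CommRing

variable {R : Type*} [CommRing R] {M : R⟦X⟧}

theorem coeff_subst_mul (hM : constantCoeff M = 0) (A G : R⟦X⟧) (n : ℕ) :
    coeff n (A.subst M * G) = ∑ k ∈ Finset.range (n + 1), coeff k A * coeff n (M ^ k * G) := by
  have hs : HasSubst M := HasSubst.of_constantCoeff_zero' hM
  -- only `trunc (n + 1) A` contributes, since `X ^ (n + 1) ∣ M ^ (n + 1)`
  have htail : coeff n (M ^ (n + 1) * ((mk fun i ↦ coeff (i + (n + 1)) A).subst M * G)) = 0 := by
    obtain ⟨c, hc⟩ := pow_dvd_pow_of_dvd (X_dvd_iff.mpr hM) (n + 1)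
    rw [hc, mul_assoc, coeff_X_pow_mul', if_neg (by omega)]
  conv_lhs => rw [eq_X_pow_mul_shift_add_trunc (n + 1) A, subst_add hs, subst_mul hs,
    subst_pow hs, subst_X hs, subst_coe hs, add_mul, map_add, mul_assoc, htail, zero_add,
    Polynomial.aeval_eq_sum_range' (natDegree_trunc_lt A n), Finset.sum_mul, map_sum]
  refine Finset.sum_congr rfl fun k hk => ?_
  rw [coeff_trunc, if_pos (Finset.mem_range.mp hk), smul_mul_assoc, coeff_smul, smul_eq_mul]

theorem coeff_subst_eq_sum_range (hM : constantCoeff M = 0) (A : R⟦X⟧) (n : ℕ) :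
    coeff n (A.subst M) = ∑ k ∈ Finset.range (n + 1), coeff k A * coeff n (M ^ k) := by
  simpa using coeff_subst_mul hM A 1 n

end CommRing

section Field

variable {K : Type*} [Field K] [CharZero K]

theorem coeff_inv_pow_succ_mul_derivative_X_mul {Φ : K⟦X⟧}
    (hΦ : constantCoeff Φ ≠ 0) (i : ℕ) :
    coeff i (Φ⁻¹ ^ (i + 1) * d⁄dX K (X * Φ)) = if i = 0 then 1 else 0 := by
  have hinv : Φ⁻¹ * Φ = 1 := PowerSeries.inv_mul_cancel _ hΦ
  have hD : d⁄dX K (X * Φ) = Φ + X * d⁄dX K Φ := by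
    rw [Derivation.leibniz, derivative_X, smul_eq_mul, smul_eq_mul, mul_one, add_comm]
  rcases i with _ | m
  · simp [hD, coeff_zero_eq_constantCoeff, hΦ]
  set g := Φ⁻¹ ^ (m + 1)
  have hg : ((m : K) + 1) • (Φ⁻¹ ^ (m + 1 + 1) * d⁄dX K (X * Φ)) =
      ((m : K) + 1) • g - X * d⁄dX K g := by
    rw [Derivation.leibniz_pow, derivative_inv', hD, Nat.add_sub_cancel,
      ← Nat.cast_smul_eq_nsmul K]
    simp only [g, Nat.cast_add, Nat.cast_one, smul_eq_C_mul]
    linear_combination (C ((m : K) + 1) * Φ⁻¹ ^ (m + 1)) * hinv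
  have hcoeff := congrArg (coeff (m + 1)) hg
  rw [coeff_smul, map_sub, coeff_smul, coeff_succ_X_mul, coeff_derivative, smul_eq_mul,
    smul_eq_mul, mul_comm (coeff (m + 1) g), sub_self] at hcoeff
  simpa [Nat.cast_add_one_ne_zero] using hcoeff

/-- Lagrange inversion. -/
theorem coeff_succ_of_eq_X_mul_subst {φ M : K⟦X⟧} (hφ : constantCoeff φ ≠ 0)
    (hM : M = X * φ.subst M) (n : ℕ) :
    ((n : K) + 1) * coeff (n + 1) M = coeff n (φ ^ (n + 1)) := by
  have hM0 : constantCoeff M = 0 := by rw [hM, map_mul, constantCoeff_X, zero_mul]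
  have hs : HasSubst M := HasSubst.of_constantCoeff_zero' hM0
  set Φ : K⟦X⟧ := φ.subst M
  have hΦ : constantCoeff Φ ≠ 0 := by
    rwa [← coeff_zero_eq_constantCoeff_apply, coeff_subst_eq_sum_range hM0, Finset.sum_range_one,
      pow_zero, coeff_one, if_pos rfl, mul_one, coeff_zero_eq_constantCoeff_apply]
  have hΦinv : Φ * Φ⁻¹ = 1 := PowerSeries.mul_inv_cancel _ hΦ
  have hresidue : ∀ k ≤ n,
      coeff n (M ^ k * (Φ⁻¹ ^ (n + 1) * d⁄dX K M)) = if k = n then 1 else 0 := by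
    intro k hk
    have hΦk : Φ ^ k * Φ⁻¹ ^ k = 1 := by rw [← mul_pow, hΦinv, one_pow]
    have hshift : M ^ k * (Φ⁻¹ ^ (n + 1) * d⁄dX K M) =
        X ^ k * (Φ⁻¹ ^ (n - k + 1) * d⁄dX K (X * Φ)) := by
      rw [← hM]
      nth_rw 1 [hM]
      rw [show n + 1 = n - k + 1 + k by omega, pow_add, mul_pow]
      linear_combination (X ^ k * Φ⁻¹ ^ (n - k + 1) * d⁄dX K M) * hΦk
    rw [hshift, coeff_X_pow_mul', if_pos hk, coeff_inv_pow_succ_mul_derivative_X_mul hΦ]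
    exact if_congr (by omega) rfl rfl
  calc ((n : K) + 1) * coeff (n + 1) M
      = coeff n (Φ ^ (n + 1) * (Φ⁻¹ ^ (n + 1) * d⁄dX K M)) := by
        rw [← mul_assoc, ← mul_pow, hΦinv, one_pow, one_mul, coeff_derivative, mul_comm]
    _ = coeff n ((φ ^ (n + 1)).subst M * (Φ⁻¹ ^ (n + 1) * d⁄dX K M)) := by rw [subst_pow hs]
    _ = coeff n (φ ^ (n + 1)) := by
        rw [coeff_subst_mul hM0, Finset.sum_congr rfl fun k hk =>
          by rw [hresidue k (Finset.mem_range_succ_iff.mp hk)]]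
        simp

end Field

end PowerSeries

theorem moments_from_free_cumulants_general {K : Type*} [Field K] [CharZero K]
    (F Mo : ℕ → K) (M : PowerSeries K)
    (hM : ∀ n, 2 ≤ n → PowerSeries.coeff n M = Mo (n - 1))
    -- the functional equation `M(z) = z / (1 - z·F(M(z)))`:
    (heq : M * (1 - PowerSeries.X * cser F M) = PowerSeries.X) :
    ∀ n : ℕ, 1 ≤ n →
      Mo n = (1 / ((n : K) + 1)) *
        PowerSeries.coeff n
          ((1 + PowerSeries.X * PowerSeries.mk fun k => F (k + 1)) ^ (n + 1)) := by
  intro n hn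
  set f : K⟦X⟧ := mk fun k => F (k + 1)
  have hMX : M = X * (1 + M * cser F M) := by linear_combination heq
  have hM0 : constantCoeff M = 0 := by rw [hMX, map_mul, constantCoeff_X, zero_mul]
  have hs : HasSubst M := HasSubst.of_constantCoeff_zero' hM0
  have hcser : cser F M = f.subst M := by
    ext k
    simp [cser, f, coeff_subst_eq_sum_range hM0]
  have hsubst : (1 + X * f).subst M = 1 + M * cser F M := by
    rw [subst_add hs, subst_mul hs, subst_X hs, hcser, ← coe_substAlgHom hs, map_one]
  have hlagrange := coeff_succ_of_eq_X_mul_subst (φ := 1 + X * f) (by simp)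
    (by rw [hsubst]; exact hMX) n
  rw [← hlagrange, hM (n + 1) (by omega), Nat.add_sub_cancel]
  field_simp

theorem moments_from_free_cumulants {K : Type*} [Field K] [CharZero K]
    (F Mo : ℕ → K) (M : PowerSeries K)
    (hM0 : PowerSeries.coeff 0 M = 0) (hM1 : PowerSeries.coeff 1 M = 1)
    (hM : ∀ n, 2 ≤ n → PowerSeries.coeff n M = Mo (n - 1))
    -- the functional equation `M(z) = z / (1 - z·F(M(z)))`:
    (heq : M * (1 - PowerSeries.X * cser F M) = PowerSeries.X) :
    ∀ n : ℕ, 1 ≤ n →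
      Mo n = (1 / ((n : K) + 1)) *
        PowerSeries.coeff n
          ((1 + PowerSeries.X * PowerSeries.mk fun k => F (k + 1)) ^ (n + 1)) :=
  moments_from_free_cumulants_general F Mo M hM heq
end
end

section
/- Let π ≤ ρ be noncrossing partitions of {1,…,n} (reverse refinement order). Then ζ(π,ρ) := Π_{B∈ρ} wt(π|_B) equals Π_{(i,j)∈arc(π)} δ_{m(i,j)}, where m(i,j) = #{k : i<k<j and i ∼_ρ k ∼_ρ j}. -/
open Finset

noncomputable section
open scoped Classical

/-- The ground set {1, ..., n}. -/
def ground (n : ℕ) : Finset ℕ := Finset.Icc 1 n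

/-- `i` and `j` lie in a common block of the partition `π`. -/
def SameBlock {s : Finset ℕ} (π : Finpartition s) (i j : ℕ) : Prop :=
  ∃ B ∈ π.parts, i ∈ B ∧ j ∈ B

/-- A partition is noncrossing if there are no `i<j<k<l` with `i∼k`, `j∼l`, `j≁k`. -/
def Noncrossing {s : Finset ℕ} (π : Finpartition s) : Prop :=
  ∀ i j k l : ℕ, i < j → j < k → k < l →
    SameBlock π i k → SameBlock π j l → SameBlock π j k

/-- `(i,j)` is an arc of `π`: `i<j`, `i∼j`, and no `k` strictly between with `i∼k∼j`. -/
def IsArc {s : Finset ℕ} (π : Finpartition s) (i j : ℕ) : Prop :=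
  i < j ∧ SameBlock π i j ∧ ¬ ∃ k, i < k ∧ k < j ∧ SameBlock π i k ∧ SameBlock π k j

/-- The set of arcs of `π`. -/
def arcs {s : Finset ℕ} (π : Finpartition s) : Finset (ℕ × ℕ) :=
  (s ×ˢ s).filter fun p => IsArc π p.1 p.2
/-- The multiplicative extension of Yoshida's weight:
`ζ(π,ρ) = ∏_{B∈ρ} wt(π|_B)`, where `wt(π|_B)` is written out as the product over
the arcs of the restriction `π|_B` (i.e. the arcs of `π` with both ends in `B`)
of `δ_{#{k∈B : i<k<j}}`. -/
def zeta {R : Type*} [CommRing R] (δ : ℕ → R) {n : ℕ}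
    (π ρ : Finpartition (ground n)) : R :=
  ∏ B ∈ ρ.parts, ∏ p ∈ (arcs π).filter (fun p => p.1 ∈ B ∧ p.2 ∈ B),
    δ ((B.filter fun k => p.1 < k ∧ k < p.2).card)

/-! Since `π ≤ ρ`, both ends of an arc of `π` lie in one block `B` of `ρ`, so the double product
defining `ζ` is a regrouping of the product over all arcs; and for `i, j ∈ B` the elements
`ρ`-equivalent to both `i` and `j` are exactly the elements of `B`. -/

section

variable {s : Finset ℕ}

theorem SameBlock.mono {π ρ : Finpartition s} (hle : π ≤ ρ) {i j : ℕ}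
    (h : SameBlock π i j) : SameBlock ρ i j := by
  obtain ⟨A, hA, hi, hj⟩ := h
  obtain ⟨B, hB, hAB⟩ := hle hA
  exact ⟨B, hB, hAB hi, hAB hj⟩

theorem sameBlock_comm (ρ : Finpartition s) (i j : ℕ) : SameBlock ρ i j ↔ SameBlock ρ j i := by
  simp only [SameBlock, and_comm]

theorem sameBlock_iff_mem_part {ρ : Finpartition s} {B : Finset ℕ} (hB : B ∈ ρ.parts)
    {i : ℕ} (hi : i ∈ B) (k : ℕ) : SameBlock ρ i k ↔ k ∈ B := by
  constructor
  · rintro ⟨C, hC, hiC, hkC⟩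
    rwa [ρ.eq_of_mem_parts hB hC hi hiC]
  · exact fun hk => ⟨B, hB, hi, hk⟩

theorem filter_between_sameBlock_eq {ρ : Finpartition s} {B : Finset ℕ} (hB : B ∈ ρ.parts)
    {i j : ℕ} (hi : i ∈ B) (hj : j ∈ B) :
    s.filter (fun k => i < k ∧ k < j ∧ SameBlock ρ i k ∧ SameBlock ρ k j) =
      B.filter (fun k => i < k ∧ k < j) := by
  ext k
  simp only [mem_filter, sameBlock_iff_mem_part hB hi, sameBlock_comm ρ k j,
    sameBlock_iff_mem_part hB hj]
  exact ⟨fun ⟨_, hik, hkj, hkB, _⟩ => ⟨hkB, hik, hkj⟩,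
    fun ⟨hkB, hik, hkj⟩ => ⟨ρ.le hB hkB, hik, hkj, hkB, hkB⟩⟩

theorem prod_parts_prod_filter_mem_part {M : Type*} [CommMonoid M] (ρ : Finpartition s)
    (t : Finset (ℕ × ℕ)) (f : ℕ × ℕ → M) (ht : ∀ p ∈ t, SameBlock ρ p.1 p.2) :
    ∏ B ∈ ρ.parts, ∏ p ∈ t.filter (fun p => p.1 ∈ B ∧ p.2 ∈ B), f p = ∏ p ∈ t, f p := by
  rw [← prod_biUnion]
  · congr 1
    ext p
    simp only [mem_biUnion, mem_filter]
    refine ⟨fun ⟨_, _, hp, _⟩ => hp, fun hp => ?_⟩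
    obtain ⟨B, hB, h1, h2⟩ := ht p hp
    exact ⟨B, hB, hp, h1, h2⟩
  · intro B hB C hC hne
    simp only [Function.onFun, disjoint_left, mem_filter]
    rintro p ⟨-, h1, -⟩ ⟨-, h1', -⟩
    exact hne (ρ.eq_of_mem_parts hB hC h1 h1')

end

theorem zeta_eq_prod_arcs_general {R : Type*} [CommRing R] (δ : ℕ → R)
    (n : ℕ) (π ρ : Finpartition (ground n))
    (hle : π ≤ ρ) :
    zeta δ π ρ =
      ∏ p ∈ arcs π,
        δ (((ground n).filter fun k =>
            p.1 < k ∧ k < p.2 ∧ SameBlock ρ p.1 k ∧ SameBlock ρ k p.2).card) := by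
  rw [zeta, ← prod_parts_prod_filter_mem_part ρ (arcs π) _
    fun p hp => ((mem_filter.1 hp).2.2.1).mono hle]
  refine prod_congr rfl fun B hB => prod_congr rfl fun p hp => ?_
  obtain ⟨-, h1, h2⟩ := mem_filter.1 hp
  rw [filter_between_sameBlock_eq hB h1 h2]

theorem zeta_eq_prod_arcs {R : Type*} [CommRing R] (δ : ℕ → R) (hδ0 : δ 0 = 1)
    (n : ℕ) (π ρ : Finpartition (ground n)) (hπ : Noncrossing π) (hρ : Noncrossing ρ)
    (hle : π ≤ ρ) :
    zeta δ π ρ =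
      ∏ p ∈ arcs π,
        δ (((ground n).filter fun k =>
            p.1 < k ∧ k < p.2 ∧ SameBlock ρ p.1 k ∧ SameBlock ρ k p.2).card) :=
  zeta_eq_prod_arcs_general δ n π ρ hle
end
end

section
/- Kreweras complementation π ↦ π^c is an order-reversing bijection (poset anti-isomorphism) from the lattice NC_n of noncrossing partitions of {1,…,n} with reverse refinement order to itself. -/
open Finset

noncomputable section
open scoped Classical

/-- The block equivalence of the interleaved partition `π ∪ σ` on `{1,…,2n}`, where
label `i` of `π` is placed at `2i-1` and label `i'` of `σ` is placed at `2i`. -/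
def interR {n : ℕ} (π σ : Finpartition (ground n)) (a b : ℕ) : Prop :=
  (Odd a ∧ Odd b ∧ SameBlock π ((a + 1) / 2) ((b + 1) / 2)) ∨
  (Even a ∧ Even b ∧ SameBlock σ (a / 2) (b / 2))

/-- Noncrossing condition for a relation on a finite ground set. -/
def NCRel (s : Finset ℕ) (r : ℕ → ℕ → Prop) : Prop :=
  ∀ i j k l : ℕ, i ∈ s → j ∈ s → k ∈ s → l ∈ s → i < j → j < k → k < l →
    r i k → r j l → r j k

/-- `σ` is the Kreweras complement of `π`: it is the largest partition of the primed
copies such that the interleaved union `π ∪ σ` is noncrossing. -/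
def IsKrewerasCompl {n : ℕ} (π σ : Finpartition (ground n)) : Prop :=
  NCRel (ground (2 * n)) (interR π σ) ∧
  ∀ σ' : Finpartition (ground n), NCRel (ground (2 * n)) (interR π σ') → σ' ≤ σ
section KrewerasProof

variable {n : ℕ}

lemma sameBlock_symm {s : Finset ℕ} {π : Finpartition s} {i j : ℕ}
    (h : SameBlock π i j) : SameBlock π j i := by
  obtain ⟨B, hB, h1, h2⟩ := h; exact ⟨B, hB, h2, h1⟩

lemma sameBlock_refl {s : Finset ℕ} (π : Finpartition s) {i : ℕ} (hi : i ∈ s) :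
    SameBlock π i i := by
  obtain ⟨B, hB, h1⟩ := π.exists_mem hi; exact ⟨B, hB, h1, h1⟩

lemma part_unique {s : Finset ℕ} (π : Finpartition s) {B C : Finset ℕ} {x : ℕ}
    (hB : B ∈ π.parts) (hC : C ∈ π.parts) (hxB : x ∈ B) (hxC : x ∈ C) : B = C := by
  by_contra hne
  exact (Finset.disjoint_left.1 (π.disjoint hB hC hne)) hxB hxC

lemma sameBlock_trans {s : Finset ℕ} {π : Finpartition s} {i j k : ℕ}
    (h1 : SameBlock π i j) (h2 : SameBlock π j k) : SameBlock π i k := by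
  obtain ⟨B, hB, hi, hj⟩ := h1
  obtain ⟨C, hC, hj', hk⟩ := h2
  exact ⟨B, hB, hi, (part_unique π hC hB hj' hj) ▸ hk⟩

lemma sameBlock_mem_left {s : Finset ℕ} {π : Finpartition s} {i j : ℕ}
    (h : SameBlock π i j) : i ∈ s := by
  obtain ⟨B, hB, hi, _⟩ := h; exact π.le hB hi

lemma sameBlock_mem_right {s : Finset ℕ} {π : Finpartition s} {i j : ℕ}
    (h : SameBlock π i j) : j ∈ s := sameBlock_mem_left (sameBlock_symm h)

lemma sameBlock_mono {s : Finset ℕ} {π ρ : Finpartition s} (hle : π ≤ ρ) {i j : ℕ}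
    (h : SameBlock π i j) : SameBlock ρ i j := by
  obtain ⟨B, hB, hi, hj⟩ := h
  obtain ⟨C, hC, hBC⟩ := hle hB
  exact ⟨C, hC, hBC hi, hBC hj⟩

structure IsEqv (s : Finset ℕ) (r : ℕ → ℕ → Prop) : Prop where
  refl : ∀ i ∈ s, r i i
  symm : ∀ i j, r i j → r j i
  trans : ∀ i j k, r i j → r j k → r i k

def cls (s : Finset ℕ) (r : ℕ → ℕ → Prop) (i : ℕ) : Finset ℕ := s.filter (r i)

def ofRel (s : Finset ℕ) (r : ℕ → ℕ → Prop) (h : IsEqv s r) : Finpartition s where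
  parts := s.image (cls s r)
  supIndep := by
    rw [Finset.supIndep_iff_pairwiseDisjoint]
    rintro B hB C hC hne
    simp only [Finset.coe_image, Set.mem_image, Finset.mem_coe] at hB hC
    obtain ⟨i, hi, rfl⟩ := hB
    obtain ⟨j, hj, rfl⟩ := hC
    show Disjoint (cls s r i) (cls s r j)
    rw [Finset.disjoint_left]
    intro x hx1 hx2
    rw [cls, Finset.mem_filter] at hx1 hx2
    apply hne
    have hrij : r i j := h.trans _ _ _ hx1.2 (h.symm _ _ hx2.2)
    have : cls s r i = cls s r j := by
      ext y
      simp only [cls, Finset.mem_filter, and_congr_right_iff]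
      intro _
      exact ⟨fun hy => h.trans _ _ _ (h.symm _ _ hrij) hy,
             fun hy => h.trans _ _ _ hrij hy⟩
    rw [this]
  sup_parts := by
    apply le_antisymm
    · refine Finset.sup_le fun B hB => ?_
      obtain ⟨i, hi, rfl⟩ := Finset.mem_image.1 hB
      exact Finset.filter_subset _ _
    · intro i hi
      have h1 : i ∈ cls s r i := Finset.mem_filter.2 ⟨hi, h.refl i hi⟩
      have h2 := Finset.le_sup (f := id) (Finset.mem_image_of_mem (cls s r) hi)
      exact Finset.le_iff_subset.mp h2 h1
  bot_notMem := by
    intro hb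
    obtain ⟨i, hi, hci⟩ := Finset.mem_image.1 hb
    have h1 : i ∈ cls s r i := Finset.mem_filter.2 ⟨hi, h.refl i hi⟩
    rw [hci] at h1
    simp at h1

lemma sameBlock_ofRel {s : Finset ℕ} {r : ℕ → ℕ → Prop} (h : IsEqv s r) {i j : ℕ} :
    SameBlock (ofRel s r h) i j ↔ i ∈ s ∧ j ∈ s ∧ r i j := by
  constructor
  · rintro ⟨B, hB, hiB, hjB⟩
    obtain ⟨k, hk, rfl⟩ := Finset.mem_image.1 hB
    have hi := Finset.mem_filter.1 hiB
    have hj := Finset.mem_filter.1 hjB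
    exact ⟨hi.1, hj.1, h.trans _ _ _ (h.symm _ _ hi.2) hj.2⟩
  · rintro ⟨hi, hj, hr⟩
    exact ⟨cls s r i, Finset.mem_image_of_mem _ hi,
      Finset.mem_filter.2 ⟨hi, h.refl i hi⟩, Finset.mem_filter.2 ⟨hj, hr⟩⟩

lemma le_ofRel {s : Finset ℕ} {r : ℕ → ℕ → Prop} (σ' : Finpartition s) (h : IsEqv s r)
    (H : ∀ i j, SameBlock σ' i j → r i j) : σ' ≤ ofRel s r h := by
  intro B hB
  have hBne : B.Nonempty := σ'.nonempty_of_mem_parts hB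
  obtain ⟨x, hx⟩ := hBne
  refine ⟨cls s r x, Finset.mem_image_of_mem _ (σ'.le hB hx), fun y hy => ?_⟩
  exact Finset.mem_filter.2 ⟨σ'.le hB hy, H x y ⟨B, hB, hx, hy⟩⟩

lemma le_of_sameBlock_imp {s : Finset ℕ} {π ρ : Finpartition s}
    (h : ∀ i j, SameBlock π i j → SameBlock ρ i j) : π ≤ ρ := by
  intro B hB
  have hBne : B.Nonempty := π.nonempty_of_mem_parts hB
  obtain ⟨x, hx⟩ := hBne
  obtain ⟨C, hC, hxC⟩ := ρ.exists_mem (π.le hB hx)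
  refine ⟨C, hC, fun y hy => ?_⟩
  obtain ⟨C', hC', hxC', hyC'⟩ := h x y ⟨B, hB, hx, hy⟩
  rwa [part_unique ρ hC' hC hxC' hxC] at hyC'

lemma eq_of_sameBlock {s : Finset ℕ} {π ρ : Finpartition s}
    (h : ∀ i j, SameBlock π i j ↔ SameBlock ρ i j) : π = ρ :=
  le_antisymm (le_of_sameBlock_imp fun i j => (h i j).1)
    (le_of_sameBlock_imp fun i j => (h i j).2)

/-- The Kreweras relation: no block of `π` straddles the interval `(a, b]`. -/
def RK (π : Finpartition (ground n)) (a b : ℕ) : Prop :=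
  ∀ u v : ℕ, SameBlock π u v → (((a < u) ↔ (b < u)) ↔ ((a < v) ↔ (b < v)))

/-- The dual Kreweras relation: no block of `σ` straddles the interval `[a, b)`. -/
def RK' (σ : Finpartition (ground n)) (a b : ℕ) : Prop :=
  ∀ u v : ℕ, SameBlock σ u v → (((a ≤ u) ↔ (b ≤ u)) ↔ ((a ≤ v) ↔ (b ≤ v)))

lemma isEqv_RK (π : Finpartition (ground n)) : IsEqv (ground n) (RK π) where
  refl := fun i _ u v _ => by tauto
  symm := fun i j h u v huv => by have := h u v huv; tauto
  trans := fun i j k h1 h2 u v huv => by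
    have := h1 u v huv; have := h2 u v huv; tauto

lemma isEqv_RK' (σ : Finpartition (ground n)) : IsEqv (ground n) (RK' σ) where
  refl := fun i _ u v _ => by tauto
  symm := fun i j h u v huv => by have := h u v huv; tauto
  trans := fun i j k h1 h2 u v huv => by
    have := h1 u v huv; have := h2 u v huv; tauto

def krk (π : Finpartition (ground n)) : Finpartition (ground n) :=
  ofRel _ (RK π) (isEqv_RK π)

def krk' (σ : Finpartition (ground n)) : Finpartition (ground n) :=
  ofRel _ (RK' σ) (isEqv_RK' σ)

lemma sameBlock_krk {π : Finpartition (ground n)} {i j : ℕ} :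
    SameBlock (krk π) i j ↔ i ∈ ground n ∧ j ∈ ground n ∧ RK π i j :=
  sameBlock_ofRel _

lemma sameBlock_krk' {σ : Finpartition (ground n)} {i j : ℕ} :
    SameBlock (krk' σ) i j ↔ i ∈ ground n ∧ j ∈ ground n ∧ RK' σ i j :=
  sameBlock_ofRel _

lemma nc_krk (π : Finpartition (ground n)) : Noncrossing (krk π) := by
  intro i j k l hij hjk hkl hik hjl
  obtain ⟨hi, hk, Hik⟩ := sameBlock_krk.1 hik
  obtain ⟨hj, hl, Hjl⟩ := sameBlock_krk.1 hjl
  refine sameBlock_krk.2 ⟨hj, hk, fun u v huv => ?_⟩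
  have h1 := Hik u v huv
  have h2 := Hjl u v huv
  omega

lemma nc_krk' (σ : Finpartition (ground n)) : Noncrossing (krk' σ) := by
  intro i j k l hij hjk hkl hik hjl
  obtain ⟨hi, hk, Hik⟩ := sameBlock_krk'.1 hik
  obtain ⟨hj, hl, Hjl⟩ := sameBlock_krk'.1 hjl
  refine sameBlock_krk'.2 ⟨hj, hk, fun u v huv => ?_⟩
  have h1 := Hik u v huv
  have h2 := Hjl u v huv
  omega

end KrewerasProof

section KrewerasProof2

variable {n : ℕ}

lemma mem_ground_iff {m k : ℕ} : k ∈ ground m ↔ 1 ≤ k ∧ k ≤ m := Finset.mem_Icc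

/-- The interleaved union of `π` and its complement is noncrossing. -/
lemma ncrel_krk (π : Finpartition (ground n)) (hπ : Noncrossing π) :
    NCRel (ground (2 * n)) (interR π (krk π)) := by
  intro i j k l hi hj hk hl hij hjk hkl hik hjl
  rcases hik with ⟨oi, ok, hik⟩ | ⟨ei, ek, hik⟩ <;>
    rcases hjl with ⟨oj, ol, hjl⟩ | ⟨ej, el, hjl⟩
  · -- both pairs odd : use noncrossingness of π
    obtain ⟨p, rfl⟩ := oi; obtain ⟨q, rfl⟩ := oj
    obtain ⟨r, rfl⟩ := ok; obtain ⟨t, rfl⟩ := ol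
    have e1 : (2 * p + 1 + 1) / 2 = p + 1 := by omega
    have e2 : (2 * q + 1 + 1) / 2 = q + 1 := by omega
    have e3 : (2 * r + 1 + 1) / 2 = r + 1 := by omega
    have e4 : (2 * t + 1 + 1) / 2 = t + 1 := by omega
    rw [e1, e3] at hik; rw [e2, e4] at hjl
    refine Or.inl ⟨⟨q, rfl⟩, ⟨r, rfl⟩, ?_⟩
    rw [e2, e3]
    exact hπ (p + 1) (q + 1) (r + 1) (t + 1) (by omega) (by omega) (by omega) hik hjl
  · -- odd pair of π crossed by even pair of the complement : impossible
    obtain ⟨p, rfl⟩ := oi; obtain ⟨r, rfl⟩ := ok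
    obtain ⟨b, rfl⟩ := ej; obtain ⟨d, rfl⟩ := el
    have e1 : (2 * p + 1 + 1) / 2 = p + 1 := by omega
    have e3 : (2 * r + 1 + 1) / 2 = r + 1 := by omega
    have e2 : (b + b) / 2 = b := by omega
    have e4 : (d + d) / 2 = d := by omega
    rw [e1, e3] at hik; rw [e2, e4] at hjl
    obtain ⟨-, -, H⟩ := sameBlock_krk.1 hjl
    have := H (p + 1) (r + 1) hik
    exfalso; omega
  · -- even pair crossed by odd pair : impossible
    obtain ⟨a, rfl⟩ := ei; obtain ⟨c, rfl⟩ := ek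
    obtain ⟨q, rfl⟩ := oj; obtain ⟨t, rfl⟩ := ol
    have e1 : (a + a) / 2 = a := by omega
    have e3 : (c + c) / 2 = c := by omega
    have e2 : (2 * q + 1 + 1) / 2 = q + 1 := by omega
    have e4 : (2 * t + 1 + 1) / 2 = t + 1 := by omega
    rw [e1, e3] at hik; rw [e2, e4] at hjl
    obtain ⟨-, -, H⟩ := sameBlock_krk.1 hik
    have := H (q + 1) (t + 1) hjl
    exfalso; omega
  · -- both pairs even : use noncrossingness of the complement
    obtain ⟨a, rfl⟩ := ei; obtain ⟨b, rfl⟩ := ej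
    obtain ⟨c, rfl⟩ := ek; obtain ⟨d, rfl⟩ := el
    have e1 : (a + a) / 2 = a := by omega
    have e2 : (b + b) / 2 = b := by omega
    have e3 : (c + c) / 2 = c := by omega
    have e4 : (d + d) / 2 = d := by omega
    rw [e1, e3] at hik; rw [e2, e4] at hjl
    refine Or.inr ⟨⟨b, rfl⟩, ⟨c, rfl⟩, ?_⟩
    rw [e2, e3]
    exact nc_krk π a b c d (by omega) (by omega) (by omega) hik hjl

lemma cross_contra (π σ' : Finpartition (ground n))
    (H : NCRel (ground (2 * n)) (interR π σ'))
    {a b u v : ℕ} (hab : SameBlock σ' a b) (huv : SameBlock π u v)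
    (h1 : a < u) (h2 : u ≤ b) (h3 : v ≤ a ∨ b < v) : False := by
  have ha := mem_ground_iff.1 (sameBlock_mem_left hab)
  have hb := mem_ground_iff.1 (sameBlock_mem_right hab)
  have hu := mem_ground_iff.1 (sameBlock_mem_left huv)
  have hv := mem_ground_iff.1 (sameBlock_mem_right huv)
  have hσ2 : SameBlock σ' (2 * a / 2) (2 * b / 2) := by
    have e1 : 2 * a / 2 = a := by omega
    have e2 : 2 * b / 2 = b := by omega
    rw [e1, e2]; exact hab
  rcases h3 with h3 | h3
  · have hcon := H (2 * v - 1) (2 * a) (2 * u - 1) (2 * b)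
      (mem_ground_iff.2 (by omega)) (mem_ground_iff.2 (by omega))
      (mem_ground_iff.2 (by omega)) (mem_ground_iff.2 (by omega))
      (by omega) (by omega) (by omega)
      (Or.inl ⟨⟨v - 1, by omega⟩, ⟨u - 1, by omega⟩, by
        have e1 : (2 * v - 1 + 1) / 2 = v := by omega
        have e2 : (2 * u - 1 + 1) / 2 = u := by omega
        rw [e1, e2]; exact sameBlock_symm huv⟩)
      (Or.inr ⟨⟨a, by omega⟩, ⟨b, by omega⟩, hσ2⟩)
    rcases hcon with ⟨h1', h2', -⟩ | ⟨h1', h2', -⟩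
    · rw [Nat.odd_iff] at h1' h2'; omega
    · rw [Nat.even_iff] at h1' h2'; omega
  · have hcon := H (2 * a) (2 * u - 1) (2 * b) (2 * v - 1)
      (mem_ground_iff.2 (by omega)) (mem_ground_iff.2 (by omega))
      (mem_ground_iff.2 (by omega)) (mem_ground_iff.2 (by omega))
      (by omega) (by omega) (by omega)
      (Or.inr ⟨⟨a, by omega⟩, ⟨b, by omega⟩, hσ2⟩)
      (Or.inl ⟨⟨u - 1, by omega⟩, ⟨v - 1, by omega⟩, by
        have e1 : (2 * u - 1 + 1) / 2 = u := by omega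
        have e2 : (2 * v - 1 + 1) / 2 = v := by omega
        rw [e1, e2]; exact huv⟩)
    rcases hcon with ⟨h1', h2', -⟩ | ⟨h1', h2', -⟩
    · rw [Nat.odd_iff] at h1' h2'; omega
    · rw [Nat.even_iff] at h1' h2'; omega

/-- Maximality of the Kreweras complement. -/
lemma krk_max (π σ' : Finpartition (ground n))
    (H : NCRel (ground (2 * n)) (interR π σ')) : σ' ≤ krk π := by
  apply le_ofRel
  intro x y hxy u v huv
  by_contra hne
  have hab : SameBlock σ' (min x y) (max x y) := by
    rcases le_total x y with h | h
    · rw [min_eq_left h, max_eq_right h]; exact hxy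
    · rw [min_eq_right h, max_eq_left h]; exact sameBlock_symm hxy
  have hcases : (min x y < u ∧ u ≤ max x y ∧ (v ≤ min x y ∨ max x y < v)) ∨
      (min x y < v ∧ v ≤ max x y ∧ (u ≤ min x y ∨ max x y < u)) := by omega
  rcases hcases with ⟨h1, h2, h3⟩ | ⟨h1, h2, h3⟩
  · exact cross_contra π σ' H hab huv h1 h2 h3
  · exact cross_contra π σ' H hab (sameBlock_symm huv) h1 h2 h3

lemma strip_mono {π : Finpartition (ground n)} (hπ : Noncrossing π) {B : Finset ℕ}
    (hB : B ∈ π.parts) {p q : ℕ} (hpB : p ∈ B) (hqB : q ∈ B)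
    (nomid : ∀ x ∈ B, x ≤ p ∨ q ≤ x) {u v : ℕ} (huv : SameBlock π u v)
    (hu1 : p < u) (hu2 : u < q) : p < v ∧ v < q := by
  have huB : u ∉ B := fun h => by rcases nomid u h with h' | h' <;> omega
  have toB : ∀ w, w ∈ B → SameBlock π u w → False := by
    rintro w hwB ⟨C, hC, huC, hwC⟩
    exact huB ((part_unique π hC hB hwC hwB) ▸ huC)
  have hpq' : SameBlock π p q := ⟨B, hB, hpB, hqB⟩
  by_contra hcon
  have hv : v ≤ p ∨ q ≤ v := by omega
  rcases hv with hv | hv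
  · by_cases hvp : v = p
    · exact toB p hpB (hvp ▸ huv)
    · have hvp' : v < p := by omega
      have h' := hπ v p u q hvp' hu1 hu2 (sameBlock_symm huv) hpq'
      exact toB p hpB (sameBlock_symm h')
  · by_cases hvq : v = q
    · exact toB q hqB (hvq ▸ huv)
    · have hvq' : q < v := by omega
      exact toB q hqB (hπ p u q v hu1 hu2 hvq' hpq' huv)

lemma interval_mono {π : Finpartition (ground n)} (hπ : Noncrossing π) {B : Finset ℕ}
    (hB : B ∈ π.parts) (hne : B.Nonempty) {u v : ℕ} (huv : SameBlock π u v)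
    (h1 : B.min' hne ≤ u) (h2 : u ≤ B.max' hne) :
    B.min' hne ≤ v ∧ v ≤ B.max' hne := by
  have hmB : B.min' hne ∈ B := B.min'_mem hne
  have hMB : B.max' hne ∈ B := B.max'_mem hne
  by_cases huB : u ∈ B
  · obtain ⟨C, hC, huC, hvC⟩ := huv
    have hvB : v ∈ B := (part_unique π hC hB huC huB) ▸ hvC
    exact ⟨B.min'_le v hvB, B.le_max' v hvB⟩
  · have hu1 : B.min' hne < u := lt_of_le_of_ne h1 (fun h => huB (h ▸ hmB))
    have hu2 : u < B.max' hne := lt_of_le_of_ne h2 (fun h => huB (h.symm ▸ hMB))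
    have toB : ∀ w, w ∈ B → SameBlock π u w → False := by
      rintro w hwB ⟨C, hC, huC, hwC⟩
      exact huB ((part_unique π hC hB hwC hwB) ▸ huC)
    have hmM : SameBlock π (B.min' hne) (B.max' hne) := ⟨B, hB, hmB, hMB⟩
    by_contra hcon
    have hv : v < B.min' hne ∨ B.max' hne < v := by omega
    rcases hv with hv | hv
    · have h' := hπ v (B.min' hne) u (B.max' hne) hv hu1 hu2 (sameBlock_symm huv) hmM
      exact toB (B.min' hne) hmB (sameBlock_symm h')
    · exact toB (B.max' hne) hMB (hπ (B.min' hne) u (B.max' hne) v hu1 hu2 hv hmM huv)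

lemma exists_straddle_Ioc (π : Finpartition (ground n)) (hπ : Noncrossing π) {i j : ℕ}
    (hi : i ∈ ground n) (hj : j ∈ ground n) (hij : i < j) (hns : ¬ SameBlock π i j) :
    ∃ a b, a ∈ ground n ∧ b ∈ ground n ∧ i ≤ a ∧ a < j ∧ (b < i ∨ j ≤ b) ∧ RK π a b := by
  obtain ⟨B, hB, hjB⟩ := π.exists_mem hj
  have hBg : ∀ x ∈ B, x ∈ ground n := fun x hx => π.le hB hx
  have hne : B.Nonempty := ⟨j, hjB⟩
  have hiB : i ∉ B := fun h => hns ⟨B, hB, h, hjB⟩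
  rw [mem_ground_iff] at hi hj
  by_cases hcase : i < B.min' hne
  · have hmg := mem_ground_iff.1 (hBg _ (B.min'_mem hne))
    have hMg := mem_ground_iff.1 (hBg _ (B.max'_mem hne))
    have hmj : B.min' hne ≤ j := B.min'_le j hjB
    have hjM : j ≤ B.max' hne := B.le_max' j hjB
    refine ⟨B.min' hne - 1, B.max' hne, mem_ground_iff.2 (by omega),
      mem_ground_iff.2 (by omega), by omega, by omega, Or.inr (by omega),
      fun u v huv => ?_⟩
    have h1 := fun a b => interval_mono hπ hB hne huv a b
    have h2 := fun a b => interval_mono hπ hB hne (sameBlock_symm huv) a b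
    omega
  · push_neg at hcase
    have hPne : (B.filter (fun x => x ≤ i)).Nonempty :=
      ⟨B.min' hne, Finset.mem_filter.2 ⟨B.min'_mem hne, hcase⟩⟩
    have hQne : (B.filter (fun x => i < x)).Nonempty :=
      ⟨j, Finset.mem_filter.2 ⟨hjB, hij⟩⟩
    obtain ⟨p, hpB, hpi, hpmax⟩ : ∃ p, p ∈ B ∧ p ≤ i ∧ ∀ x ∈ B, x ≤ i → x ≤ p :=
      ⟨(B.filter (fun x => x ≤ i)).max' hPne,
        (Finset.mem_filter.1 (Finset.max'_mem _ hPne)).1,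
        (Finset.mem_filter.1 (Finset.max'_mem _ hPne)).2,
        fun x hx hxi => Finset.le_max' (B.filter (fun y => y ≤ i)) x (Finset.mem_filter.2 ⟨hx, hxi⟩)⟩
    obtain ⟨q, hqB, hqi, hqmin⟩ : ∃ q, q ∈ B ∧ i < q ∧ ∀ x ∈ B, i < x → q ≤ x :=
      ⟨(B.filter (fun x => i < x)).min' hQne,
        (Finset.mem_filter.1 (Finset.min'_mem _ hQne)).1,
        (Finset.mem_filter.1 (Finset.min'_mem _ hQne)).2,
        fun x hx hxi => Finset.min'_le (B.filter (fun y => i < y)) x (Finset.mem_filter.2 ⟨hx, hxi⟩)⟩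
    have hpi' : p < i := lt_of_le_of_ne hpi (fun h => hiB (h ▸ hpB))
    have hqj : q ≤ j := hqmin j hjB hij
    have nomid : ∀ x ∈ B, x ≤ p ∨ q ≤ x := fun x hx => by
      rcases le_or_gt x i with h | h
      exacts [Or.inl (hpmax x hx h), Or.inr (hqmin x hx h)]
    refine ⟨q - 1, p, mem_ground_iff.2 (by omega), hBg p hpB, by omega, by omega,
      Or.inl hpi', fun u v huv => ?_⟩
    have h1 := fun a b => strip_mono hπ hB hpB hqB nomid huv a b
    have h2 := fun a b => strip_mono hπ hB hpB hqB nomid (sameBlock_symm huv) a b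
    have hpq : p < q := by omega
    omega

lemma exists_straddle_Ico (σ : Finpartition (ground n)) (hσ : Noncrossing σ) {i j : ℕ}
    (hi : i ∈ ground n) (hj : j ∈ ground n) (hij : i < j) (hns : ¬ SameBlock σ i j) :
    ∃ a b, a ∈ ground n ∧ b ∈ ground n ∧ i < a ∧ a ≤ j ∧ (b ≤ i ∨ j < b) ∧ RK' σ a b := by
  obtain ⟨B, hB, hiB⟩ := σ.exists_mem hi
  have hBg : ∀ x ∈ B, x ∈ ground n := fun x hx => σ.le hB hx
  have hne : B.Nonempty := ⟨i, hiB⟩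
  have hjB : j ∉ B := fun h => hns ⟨B, hB, hiB, h⟩
  rw [mem_ground_iff] at hi hj
  by_cases hcase : B.max' hne < j
  · have hmg := mem_ground_iff.1 (hBg _ (B.min'_mem hne))
    have hMg := mem_ground_iff.1 (hBg _ (B.max'_mem hne))
    have hmi : B.min' hne ≤ i := B.min'_le i hiB
    have hiM : i ≤ B.max' hne := B.le_max' i hiB
    refine ⟨B.max' hne + 1, B.min' hne, mem_ground_iff.2 (by omega),
      mem_ground_iff.2 (by omega), by omega, by omega, Or.inl (by omega),
      fun u v huv => ?_⟩
    have h1 := fun a b => interval_mono hσ hB hne huv a b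
    have h2 := fun a b => interval_mono hσ hB hne (sameBlock_symm huv) a b
    omega
  · push_neg at hcase
    have hPne : (B.filter (fun x => x < j)).Nonempty :=
      ⟨i, Finset.mem_filter.2 ⟨hiB, hij⟩⟩
    have hQne : (B.filter (fun x => j ≤ x)).Nonempty :=
      ⟨B.max' hne, Finset.mem_filter.2 ⟨B.max'_mem hne, hcase⟩⟩
    obtain ⟨p, hpB, hpj, hpmax⟩ : ∃ p, p ∈ B ∧ p < j ∧ ∀ x ∈ B, x < j → x ≤ p :=
      ⟨(B.filter (fun x => x < j)).max' hPne,
        (Finset.mem_filter.1 (Finset.max'_mem _ hPne)).1,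
        (Finset.mem_filter.1 (Finset.max'_mem _ hPne)).2,
        fun x hx hxi => Finset.le_max' (B.filter (fun y => y < j)) x (Finset.mem_filter.2 ⟨hx, hxi⟩)⟩
    obtain ⟨q, hqB, hqj, hqmin⟩ : ∃ q, q ∈ B ∧ j ≤ q ∧ ∀ x ∈ B, j ≤ x → q ≤ x :=
      ⟨(B.filter (fun x => j ≤ x)).min' hQne,
        (Finset.mem_filter.1 (Finset.min'_mem _ hQne)).1,
        (Finset.mem_filter.1 (Finset.min'_mem _ hQne)).2,
        fun x hx hxi => Finset.min'_le (B.filter (fun y => j ≤ y)) x (Finset.mem_filter.2 ⟨hx, hxi⟩)⟩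
    have hqj' : j < q := lt_of_le_of_ne hqj (fun h => hjB (h ▸ hqB))
    have hip : i ≤ p := hpmax i hiB hij
    have nomid : ∀ x ∈ B, x ≤ p ∨ q ≤ x := fun x hx => by
      rcases lt_or_ge x j with h | h
      exacts [Or.inl (hpmax x hx h), Or.inr (hqmin x hx h)]
    refine ⟨p + 1, q, mem_ground_iff.2 (by omega), hBg q hqB, by omega, by omega,
      Or.inr hqj', fun u v huv => ?_⟩
    have h1 := fun a b => strip_mono hσ hB hpB hqB nomid huv a b
    have h2 := fun a b => strip_mono hσ hB hpB hqB nomid (sameBlock_symm huv) a b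
    have hpq : p < q := by omega
    omega

lemma krk'_krk (π : Finpartition (ground n)) (hπ : Noncrossing π) : krk' (krk π) = π := by
  apply eq_of_sameBlock
  intro i j
  rw [sameBlock_krk']
  constructor
  · rintro ⟨hi, hj, H⟩
    by_contra hns
    rcases eq_or_ne i j with rfl | hne0
    · exact hns (sameBlock_refl π hi)
    rcases hne0.lt_or_gt with hij | hij
    · obtain ⟨a, b, hag, hbg, h1, h2, h3, hRK⟩ := exists_straddle_Ioc π hπ hi hj hij hns
      have := H a b (sameBlock_krk.2 ⟨hag, hbg, hRK⟩)
      omega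
    · obtain ⟨a, b, hag, hbg, h1, h2, h3, hRK⟩ :=
        exists_straddle_Ioc π hπ hj hi hij (fun h => hns (sameBlock_symm h))
      have := H a b (sameBlock_krk.2 ⟨hag, hbg, hRK⟩)
      omega
  · intro hπij
    refine ⟨sameBlock_mem_left hπij, sameBlock_mem_right hπij, fun u v huv => ?_⟩
    obtain ⟨hu, hv, hR⟩ := sameBlock_krk.1 huv
    have := hR i j hπij
    omega

lemma krk_krk' (σ : Finpartition (ground n)) (hσ : Noncrossing σ) : krk (krk' σ) = σ := by
  apply eq_of_sameBlock
  intro i j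
  rw [sameBlock_krk]
  constructor
  · rintro ⟨hi, hj, H⟩
    by_contra hns
    rcases eq_or_ne i j with rfl | hne0
    · exact hns (sameBlock_refl σ hi)
    rcases hne0.lt_or_gt with hij | hij
    · obtain ⟨a, b, hag, hbg, h1, h2, h3, hRK⟩ := exists_straddle_Ico σ hσ hi hj hij hns
      have := H a b (sameBlock_krk'.2 ⟨hag, hbg, hRK⟩)
      omega
    · obtain ⟨a, b, hag, hbg, h1, h2, h3, hRK⟩ :=
        exists_straddle_Ico σ hσ hj hi hij (fun h => hns (sameBlock_symm h))
      have := H a b (sameBlock_krk'.2 ⟨hag, hbg, hRK⟩)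
      omega
  · intro hσij
    refine ⟨sameBlock_mem_left hσij, sameBlock_mem_right hσij, fun u v huv => ?_⟩
    obtain ⟨hu, hv, hR⟩ := sameBlock_krk'.1 huv
    have := hR i j hσij
    omega

lemma krk_antitone {π ρ : Finpartition (ground n)} (h : π ≤ ρ) : krk ρ ≤ krk π :=
  le_ofRel _ _ fun i j hij u v huv =>
    (sameBlock_krk.1 hij).2.2 u v (sameBlock_mono h huv)

lemma krk'_antitone {π ρ : Finpartition (ground n)} (h : π ≤ ρ) : krk' ρ ≤ krk' π :=
  le_ofRel _ _ fun i j hij u v huv =>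
    (sameBlock_krk'.1 hij).2.2 u v (sameBlock_mono h huv)

end KrewerasProof2

theorem kreweras_anti_isomorphism (n : ℕ) :
    ∃ c : {π : Finpartition (ground n) // Noncrossing π} →
          {π : Finpartition (ground n) // Noncrossing π},
      Function.Bijective c ∧
      (∀ π, IsKrewerasCompl π.1 (c π).1) ∧
      (∀ π ρ, π.1 ≤ ρ.1 ↔ (c ρ).1 ≤ (c π).1) := by
  refine ⟨fun π => ⟨krk π.1, nc_krk π.1⟩, ⟨?_, ?_⟩, ?_, ?_⟩
  · -- injective
    intro π ρ h
    have h1 : krk π.1 = krk ρ.1 := congrArg Subtype.val h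
    have h2 := congrArg krk' h1
    rw [krk'_krk π.1 π.2, krk'_krk ρ.1 ρ.2] at h2
    exact Subtype.ext h2
  · -- surjective
    intro σ
    exact ⟨⟨krk' σ.1, nc_krk' σ.1⟩, Subtype.ext (krk_krk' σ.1 σ.2)⟩
  · -- Kreweras complement property
    intro π
    exact ⟨ncrel_krk π.1 π.2, fun σ' h => krk_max π.1 σ' h⟩
  · -- order reversing
    intro π ρ
    constructor
    · exact fun h => krk_antitone h
    · intro h
      have h2 := krk'_antitone h
      rwa [krk'_krk π.1 π.2, krk'_krk ρ.1 ρ.2] at h2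
end
end
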